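/- Let G(T) be a connected threshold graph on {1,…,n} (n ≥ 2) with construction sequence T and Laplacian matrix L. Then the number of distinct nonzero eigenvalues of L equals the number of distinct vertex degrees of G(T): |{λ ∈ ℝ : λ ≠ 0 and det(λ·I − L) = 0}| = |{d(1),…,d(n)}|. -/

import Mathlib

open Finset Matrix Polynomial

/-- The threshold graph on `Fin n` (vertex `i` of the paper corresponds to `⟨i-1, _⟩ : Fin n`)
with construction sequence `T` : two distinct vertices are adjacent iff the later one
(in the construction order) was added by a join operation. -/
def thresholdGraph (n : ℕ) (T : Fin n → Bool) : SimpleGraph (Fin n) where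
  Adj i j := i ≠ j ∧ T (max i j) = true
  symm := by
    constructor
    intro i j h
    exact ⟨h.1.symm, by rw [max_comm]; exact h.2⟩
  loopless := by
    constructor
    intro i h
    exact h.1 rfl

instance thresholdGraph.instDecidableRelAdj (n : ℕ) (T : Fin n → Bool) :
    DecidableRel (thresholdGraph n T).Adj :=
  fun i j => decidable_of_iff (i ≠ j ∧ T (max i j) = true) Iff.rfl

/-! The columns of `helmert n`, namely the all-ones vector and, for `1 ≤ k < n`, the vector
`(1, …, 1, -k, 0, …, 0)` with `k` ones, are pairwise orthogonal Laplacian eigenvectors of every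
threshold graph on `n` vertices, the `k`-th one with eigenvalue `d(k) + T(k)`. So the nonzero
eigenvalues are the numbers `d(k) + T(k)` for `k ≥ 1`, all positive by connectivity. A vertex
`i ≥ 1` added as an isolated vertex has smaller degree than any vertex added by a join, so adding
`T(k)` to `d(k)` neither merges nor splits degree values; and `d(0) = d(1)` because `T(0) = 0`. -/

theorem Finset.card_filter_Ici {α : Type*} [PartialOrder α] [LocallyFiniteOrderTop α]
    (p : α → Prop) [DecidablePred p] (a : α) :
    #{x ∈ Ici a | p x} = (if p a then 1 else 0) + #{x ∈ Ioi a | p x} := by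
  classical
  rw [← Ioi_insert, filter_insert]
  split_ifs
  · rw [card_insert_of_notMem (by simp), add_comm]
  · rw [zero_add]

theorem Finset.card_image_add_ite_eq_card_image {ι : Type*} (s : Finset ι) (p : ι → Prop)
    [DecidablePred p] (f : ι → ℕ) (hf : ∀ i ∈ s, ∀ j ∈ s, ¬p i → p j → f i < f j) :
    #(s.image fun i => f i + if p i then 1 else 0) = #(s.image f) := by
  classical
  -- The shift is the restriction to `f '' s` of a strictly monotone map of `ℕ`.
  let g : ℕ → ℕ := fun x => x + if ∃ i ∈ s, p i ∧ f i ≤ x then 1 else 0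
  have hg : StrictMono g := by
    intro x y hxy
    by_cases hx : ∃ i ∈ s, p i ∧ f i ≤ x
    · have hy : ∃ i ∈ s, p i ∧ f i ≤ y := by
        obtain ⟨i, hi, hpi, hix⟩ := hx
        exact ⟨i, hi, hpi, hix.trans hxy.le⟩
      simp only [g, if_pos hx, if_pos hy]
      omega
    · simp only [g, if_neg hx]
      split_ifs <;> omega
  have hgf : ∀ i ∈ s, g (f i) = f i + if p i then 1 else 0 := by
    intro i hi
    by_cases hpi : p i
    · have : ∃ j ∈ s, p j ∧ f j ≤ f i := ⟨i, hi, hpi, le_rfl⟩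
      simp only [g, if_pos hpi, if_pos this]
    · have : ¬∃ j ∈ s, p j ∧ f j ≤ f i := fun ⟨j, hj, hpj, hji⟩ =>
        (hf i hi j hj hpi hpj).not_ge hji
      simp only [g, if_neg hpi, if_neg this]
  rw [← image_congr hgf, ← card_image_of_injective (s.image f) hg.injective, image_image]
  rfl

namespace Matrix

variable {K ι : Type*} [Field K] [Fintype ι] [DecidableEq ι]

theorem det_ne_zero_of_transpose_mul_self_eq_diagonal {P : Matrix ι ι K} {c : ι → K}
    (hP : Pᵀ * P = diagonal c) (hc : ∀ i, c i ≠ 0) : P.det ≠ 0 := by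
  intro h
  have := congrArg det hP
  rw [det_mul, det_transpose, h, zero_mul, det_diagonal] at this
  exact prod_ne_zero_iff.2 (fun i _ => hc i) this.symm

theorem det_smul_one_sub_eq_prod_of_mulVec_transpose {A P : Matrix ι ι K} {μ : ι → K}
    (hP : P.det ≠ 0) (hA : ∀ k, A *ᵥ Pᵀ k = μ k • Pᵀ k) (x : K) :
    (x • 1 - A).det = ∏ k, (x - μ k) := by
  have hAP : A * P = P * diagonal μ := by
    ext i k
    rw [mul_diagonal, mul_apply]
    simpa [mulVec, dotProduct, mul_comm] using congrFun (hA k) i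
  have hxAP : (x • 1 - A) * P = P * diagonal (fun k => x - μ k) := by
    rw [sub_mul, hAP, show diagonal (fun k => x - μ k) = x • 1 - diagonal μ by
      ext i j; by_cases h : i = j <;> simp [h]]
    simp [mul_sub]
  have := congrArg det hxAP
  rw [det_mul, det_mul, det_diagonal, mul_comm] at this
  exact mul_left_cancel₀ hP this

end Matrix

theorem ncard_setOf_ne_zero_and_prod_sub_natCast_eq_zero {K ι : Type*} [Field K] [CharZero K]
    [Fintype ι] (f : ι → ℕ) :
    {x : K | x ≠ 0 ∧ ∏ k, (x - f k) = 0}.ncard = #(({k | f k ≠ 0} : Finset ι).image f) := by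
  classical
  have hset : {x : K | x ≠ 0 ∧ ∏ k, (x - f k) = 0} =
      ((({k | f k ≠ 0} : Finset ι).image f).image Nat.cast : Finset K) := by
    ext x
    simp only [Set.mem_ofPred_eq, prod_eq_zero_iff, Finset.mem_univ, true_and, sub_eq_zero,
      coe_image, coe_filter, Set.mem_image]
    constructor
    · rintro ⟨hx, k, rfl⟩
      exact ⟨f k, ⟨k, by simpa using hx, rfl⟩, rfl⟩
    · rintro ⟨_, ⟨k, hk, rfl⟩, rfl⟩
      exact ⟨by simpa using hk, k, rfl⟩
  rw [hset, Set.ncard_coe_finset, card_image_of_injective _ Nat.cast_injective]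

section Helmert

variable {R : Type*} [CommRing R] {n : ℕ}

def helmert (n : ℕ) : Matrix (Fin n) (Fin n) R :=
  fun j k =>
    if (k : ℕ) = 0 then 1 else (if j < k then 1 else 0) - if j = k then ((k : ℕ) : R) else 0

theorem helmert_apply_of_val_eq_zero {k : Fin n} (hk : (k : ℕ) = 0) (j : Fin n) :
    (helmert n : Matrix (Fin n) (Fin n) R) j k = 1 := by
  simp [helmert, hk]

theorem helmert_apply_of_val_ne_zero {k : Fin n} (hk : (k : ℕ) ≠ 0) (j : Fin n) :
    (helmert n : Matrix (Fin n) (Fin n) R) j k =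
      (if j < k then 1 else 0) - if j = k then ((k : ℕ) : R) else 0 := by
  simp [helmert, hk]

theorem helmert_apply_of_lt {j k : Fin n} (h : j < k) :
    (helmert n : Matrix (Fin n) (Fin n) R) j k = 1 := by
  simp [helmert, h, h.ne]

theorem helmert_apply_self_of_val_ne_zero {k : Fin n} (hk : (k : ℕ) ≠ 0) :
    (helmert n : Matrix (Fin n) (Fin n) R) k k = -((k : ℕ) : R) := by
  simp [helmert, hk]

theorem helmert_apply_of_gt {j k : Fin n} (hk : (k : ℕ) ≠ 0) (h : k < j) :
    (helmert n : Matrix (Fin n) (Fin n) R) j k = 0 := by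
  simp [helmert, hk, h.not_gt, h.ne']

theorem mulVec_helmert_transpose_apply (A : Matrix (Fin n) (Fin n) R) {k : Fin n}
    (hk : (k : ℕ) ≠ 0) (j : Fin n) :
    (A *ᵥ (helmert n)ᵀ k) j = ∑ m ∈ Iio k, A j m - (k : ℕ) * A j k := by
  simp [mulVec, dotProduct, helmert_apply_of_val_ne_zero hk, mul_sub, sum_sub_distrib,
    ← sum_filter, filter_gt_eq_Iio, mul_comm]

theorem sum_helmert_of_val_ne_zero {k : Fin n} (hk : (k : ℕ) ≠ 0) :
    ∑ j, (helmert n : Matrix (Fin n) (Fin n) R) j k = 0 := by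
  simp [helmert_apply_of_val_ne_zero hk, sum_sub_distrib, filter_gt_eq_Iio]

theorem helmert_mul_helmert_of_lt {j k k' : Fin n} (hk : (k : ℕ) ≠ 0) (h : k < k') :
    (helmert n j k : R) * helmert n j k' = helmert n j k := by
  rcases lt_or_ge k j with hkj | hjk
  · rw [helmert_apply_of_gt hk hkj, zero_mul]
  · rw [helmert_apply_of_lt (hjk.trans_lt h), mul_one]

theorem sum_helmert_mul_helmert_of_lt {k k' : Fin n} (h : k < k') :
    ∑ j, (helmert n j k : R) * helmert n j k' = 0 := by
  by_cases hk : (k : ℕ) = 0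
  · have hk' : (k' : ℕ) ≠ 0 := by
      have : (k : ℕ) < k' := h
      omega
    simp [helmert_apply_of_val_eq_zero hk, sum_helmert_of_val_ne_zero hk']
  · simp [helmert_mul_helmert_of_lt hk h, sum_helmert_of_val_ne_zero hk]

theorem transpose_helmert_mul_helmert :
    (helmert n)ᵀ * helmert n =
      diagonal fun k : Fin n => if (k : ℕ) = 0 then (n : R) else (k : ℕ) + ((k : ℕ) : R) ^ 2 := by
  ext k k'
  simp only [mul_apply, transpose_apply, diagonal_apply]
  rcases lt_trichotomy k k' with h | rfl | h
  · rw [if_neg h.ne, sum_helmert_mul_helmert_of_lt h]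
  · rw [if_pos rfl]
    split_ifs with hk
    · simp [helmert_apply_of_val_eq_zero hk]
    · have hsq : ∀ j, (helmert n j k : R) * helmert n j k =
          (if j < k then 1 else 0) + if j = k then ((k : ℕ) : R) ^ 2 else 0 := by
        intro j
        rcases lt_trichotomy j k with hjk | rfl | hjk
        · simp [helmert_apply_of_lt hjk, hjk, hjk.ne]
        · simp [helmert_apply_self_of_val_ne_zero hk, sq]
        · simp [helmert_apply_of_gt hk hjk, hjk.not_gt, hjk.ne']
      simp [hsq, sum_add_distrib, filter_gt_eq_Iio]
  · simp_rw [if_neg h.ne', mul_comm (helmert n _ k), sum_helmert_mul_helmert_of_lt h]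

theorem det_helmert_ne_zero {K : Type*} [Field K] [CharZero K] :
    (helmert n : Matrix (Fin n) (Fin n) K).det ≠ 0 := by
  refine det_ne_zero_of_transpose_mul_self_eq_diagonal transpose_helmert_mul_helmert fun k => ?_
  split_ifs with hk
  · exact Nat.cast_ne_zero.2 k.pos.ne'
  · exact_mod_cast (Nat.add_pos_left (Nat.pos_of_ne_zero hk) _).ne'

end Helmert

def thresholdGraph.lapEigenvalue (n : ℕ) (T : Fin n → Bool) (k : Fin n) : ℕ :=
  if (k : ℕ) = 0 then 0 else (thresholdGraph n T).degree k + if T k then 1 else 0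

open thresholdGraph

section ThresholdGraph

variable {R : Type*} [CommRing R] {n : ℕ} {T : Fin n → Bool}

theorem thresholdGraph_adj_of_lt {i j : Fin n} (h : i < j) :
    (thresholdGraph n T).Adj i j ↔ T j = true := by
  simp [thresholdGraph, h.ne, max_eq_right h.le]

theorem thresholdGraph_neighborFinset (i : Fin n) :
    (thresholdGraph n T).neighborFinset i = (if T i then Iio i else ∅) ∪ {j ∈ Ioi i | T j} := by
  ext j
  rw [SimpleGraph.mem_neighborFinset]
  rcases lt_trichotomy j i with h | rfl | h
  · rw [SimpleGraph.adj_comm, thresholdGraph_adj_of_lt h]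
    split_ifs <;> simp [*, h.not_gt]
  · split_ifs <;> simp
  · rw [thresholdGraph_adj_of_lt h]
    split_ifs <;> simp [h, h.not_gt]

theorem thresholdGraph_degree (i : Fin n) :
    (thresholdGraph n T).degree i = (if T i then (i : ℕ) else 0) + #{j ∈ Ioi i | T j} := by
  rw [← SimpleGraph.card_neighborFinset_eq_degree, thresholdGraph_neighborFinset,
    card_union_of_disjoint]
  · split_ifs <;> simp
  · split_ifs
    · exact disjoint_left.2 fun j hji hij =>
        (mem_Iio.1 hji).not_gt (mem_Ioi.1 (mem_filter.1 hij).1)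
    · exact disjoint_empty_left _

theorem thresholdGraph_lapMatrix_apply_self (i : Fin n) :
    (thresholdGraph n T).lapMatrix R i i = (thresholdGraph n T).degree i := by
  simp [SimpleGraph.lapMatrix, SimpleGraph.degMatrix]

theorem thresholdGraph_lapMatrix_apply_of_lt {i j : Fin n} (h : i < j) :
    (thresholdGraph n T).lapMatrix R i j = -if T j then 1 else 0 := by
  simp [SimpleGraph.lapMatrix, SimpleGraph.degMatrix, h.ne, thresholdGraph_adj_of_lt h]

theorem thresholdGraph_lapMatrix_apply_of_gt {i j : Fin n} (h : j < i) :
    (thresholdGraph n T).lapMatrix R i j = -if T i then 1 else 0 := by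
  rw [← ((thresholdGraph n T).isSymm_lapMatrix R).apply, thresholdGraph_lapMatrix_apply_of_lt h]

theorem thresholdGraph_sum_lapMatrix_Iio_of_le {j k : Fin n} (h : k ≤ j) :
    ∑ m ∈ Iio k, (thresholdGraph n T).lapMatrix R j m = -((k : ℕ) * if T j then 1 else 0) := by
  rw [sum_congr rfl fun m hm => thresholdGraph_lapMatrix_apply_of_gt ((mem_Iio.1 hm).trans_le h)]
  simp

theorem thresholdGraph_sum_lapMatrix_Iio_of_lt {j k : Fin n} (h : j < k) :
    ∑ m ∈ Iio k, (thresholdGraph n T).lapMatrix R j m = #{m ∈ Ici k | T m} := by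
  have hrow : ∑ m, (thresholdGraph n T).lapMatrix R j m = 0 := by
    simpa [mulVec, dotProduct] using
      congrFun ((thresholdGraph n T).lapMatrix_mulVec_const_eq_zero (R := R)) j
  have hIci : ({m | ¬m < k} : Finset (Fin n)) = Ici k := by
    ext
    simp
  rw [← sum_filter_add_sum_filter_not univ (· < k), filter_gt_eq_Iio, hIci] at hrow
  rw [eq_neg_of_add_eq_zero_left hrow,
    sum_congr rfl fun m hm => thresholdGraph_lapMatrix_apply_of_lt (h.trans_le (mem_Ici.1 hm))]
  simp [sum_boole]

theorem thresholdGraph_lapMatrix_mulVec_helmert_transpose (k : Fin n) :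
    (thresholdGraph n T).lapMatrix R *ᵥ (helmert n)ᵀ k =
      (lapEigenvalue n T k : R) • (helmert n)ᵀ k := by
  by_cases hk : (k : ℕ) = 0
  · have hones : (helmert n)ᵀ k = fun _ => (1 : R) := funext (helmert_apply_of_val_eq_zero hk)
    simp [hones, lapEigenvalue, hk, SimpleGraph.lapMatrix_mulVec_const_eq_zero]
  ext j
  rw [mulVec_helmert_transpose_apply _ hk, Pi.smul_apply, transpose_apply,
    smul_eq_mul, lapEigenvalue, if_neg hk]
  rcases lt_trichotomy j k with h | rfl | h
  · rw [thresholdGraph_sum_lapMatrix_Iio_of_lt h, thresholdGraph_lapMatrix_apply_of_lt h,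
      helmert_apply_of_lt h, card_filter_Ici, thresholdGraph_degree]
    split_ifs <;> push_cast <;> ring
  · rw [thresholdGraph_sum_lapMatrix_Iio_of_le le_rfl, thresholdGraph_lapMatrix_apply_self,
      helmert_apply_self_of_val_ne_zero hk]
    split_ifs <;> push_cast <;> ring
  · rw [thresholdGraph_sum_lapMatrix_Iio_of_le h.le, thresholdGraph_lapMatrix_apply_of_gt h,
      helmert_apply_of_gt hk h]
    ring

theorem thresholdGraph_det_smul_one_sub_lapMatrix {K : Type*} [Field K] [CharZero K] (x : K) :
    (x • 1 - (thresholdGraph n T).lapMatrix K).det = ∏ k, (x - lapEigenvalue n T k) :=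
  det_smul_one_sub_eq_prod_of_mulVec_transpose det_helmert_ne_zero
    thresholdGraph_lapMatrix_mulVec_helmert_transpose x

theorem thresholdGraph_degree_lt_degree {i j : Fin n} (hi : (i : ℕ) ≠ 0) (hj : (j : ℕ) ≠ 0)
    (hTi : T i = false) (hTj : T j = true) :
    (thresholdGraph n T).degree i < (thresholdGraph n T).degree j := by
  rw [thresholdGraph_degree, thresholdGraph_degree, if_neg (by simp [hTi]), if_pos hTj, zero_add]
  rcases le_or_gt i j with h | h
  · have hsub : {m ∈ Ioi i | T m} ⊆ Ioc i j ∪ {m ∈ Ioi j | T m} := by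
      intro m hm
      simp only [mem_filter, mem_Ioi, mem_union, mem_Ioc] at hm ⊢
      rcases le_or_gt m j with hmj | hjm
      · exact Or.inl ⟨hm.1, hmj⟩
      · exact Or.inr ⟨hjm, hm.2⟩
    have := (card_le_card hsub).trans (card_union_le _ _)
    rw [Fin.card_Ioc] at this
    omega
  · have := card_le_card (filter_subset_filter (T · = true) (Ioi_subset_Ioi h.le))
    omega

theorem thresholdGraph_degree_zero_eq_degree_one (hn : 2 ≤ n) (hT0 : T ⟨0, by omega⟩ = false) :
    (thresholdGraph n T).degree ⟨0, by omega⟩ = (thresholdGraph n T).degree ⟨1, hn⟩ := by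
  have hIoi : Ioi (⟨0, by omega⟩ : Fin n) = Ici ⟨1, hn⟩ := by
    ext m
    simp [Fin.lt_def, Fin.le_def]
    omega
  rw [thresholdGraph_degree, thresholdGraph_degree, if_neg (by simp [hT0]), hIoi, card_filter_Ici]
  split_ifs <;> simp

theorem thresholdGraph_filter_lapEigenvalue_ne_zero (hn : 2 ≤ n)
    (hconn : (thresholdGraph n T).Connected) :
    ({k | lapEigenvalue n T k ≠ 0} : Finset (Fin n)) = univ.erase ⟨0, by omega⟩ := by
  have : Nontrivial (Fin n) := Fin.nontrivial_iff_two_le.2 hn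
  ext k
  have hpos := hconn.preconnected.degree_pos_of_nontrivial k
  simp [lapEigenvalue, Fin.ext_iff, hpos.ne']

theorem thresholdGraph_image_degree_erase_zero (hn : 2 ≤ n) (hT0 : T ⟨0, by omega⟩ = false) :
    (univ.erase (⟨0, by omega⟩ : Fin n)).image (fun i => (thresholdGraph n T).degree i) =
      univ.image (fun i => (thresholdGraph n T).degree i) := by
  conv_rhs => rw [← insert_erase (mem_univ ⟨0, by omega⟩), image_insert]
  refine (insert_eq_of_mem ?_).symm
  rw [thresholdGraph_degree_zero_eq_degree_one hn hT0]
  exact mem_image_of_mem _ (by simp [Fin.ext_iff])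

theorem thresholdGraph_card_image_lapEigenvalue (hn : 2 ≤ n) (hT0 : T ⟨0, by omega⟩ = false) :
    #((univ.erase (⟨0, by omega⟩ : Fin n)).image (lapEigenvalue n T)) =
      #(univ.image fun i => (thresholdGraph n T).degree i) := by
  have hval : ∀ k ∈ univ.erase (⟨0, by omega⟩ : Fin n),
      lapEigenvalue n T k = (thresholdGraph n T).degree k + if T k then 1 else 0 := by
    intro k hk
    simp_all [lapEigenvalue, Fin.ext_iff]
  rw [image_congr hval, card_image_add_ite_eq_card_image,
    thresholdGraph_image_degree_erase_zero hn hT0]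
  intro i hi j hj hTi hTj
  simp only [mem_erase, Fin.ne_iff_vne] at hi hj
  exact thresholdGraph_degree_lt_degree hi.1 hj.1 (by simpa using hTi) hTj

end ThresholdGraph

/-- in a connected threshold graph, the number of distinct nonzero Laplacian
eigenvalues equals the number of distinct vertex degrees. -/
theorem thresholdGraph_card_nonzero_eigenvalues (n : ℕ) (T : Fin n → Bool) (hn : 2 ≤ n)
    (hT1 : T ⟨0, lt_of_lt_of_le two_pos hn⟩ = false)
    (hconn : (thresholdGraph n T).Connected) :
    {lam : ℝ | lam ≠ 0 ∧
        (lam • (1 : Matrix (Fin n) (Fin n) ℝ) - (thresholdGraph n T).lapMatrix ℝ).det = 0}.ncard =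
      (Finset.univ.image (fun i => (thresholdGraph n T).degree i)).card := by
  simp_rw [thresholdGraph_det_smul_one_sub_lapMatrix]
  rw [ncard_setOf_ne_zero_and_prod_sub_natCast_eq_zero,
    thresholdGraph_filter_lapEigenvalue_ne_zero hn hconn]
  exact thresholdGraph_card_image_lapEigenvalue hn hT1
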